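/- arXiv:2201.05030 — 2 statements merged into one kernel-verified Lean document; each statement's English description precedes it below -/
import Mathlib

section
/- Let n ≥ 2, let A′ be a fixed (n−1)×(n−1) complex Hermitian matrix, and let b ∈ ℂ^{n−1} be a fixed vector. For each t ∈ ℝ, let A(t) be the n×n Hermitian matrix whose top-left (n−1)×(n−1) block is A′, whose last column above the diagonal is b, whose last row left of the diagonal is the conjugate transpose of b, and whose (n,n) entry is t. Let λ_1(A(t)) ≤ ⋯ ≤ λ_n(A(t)) and λ_1′(A′) ≤ ⋯ ≤ λ_{n−1}′(A′) denote eigenvalues in increasing order. Then as t → +∞: (i) λ_j(A(t)) → λ_j′(A′) for each 1 ≤ j ≤ n−1; (ii) t ≤ λ_n(A(t)) for every t; and (iii) λ_n(A(t))/t → 1. -/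
/-!
Cauchy interlacing (the min-max principle applied to the subspace `ℂⁿ⁻¹ × {0}`) gives
`λ_j(A(t)) ≤ λ_j(A')` for `j < n`, and the Rayleigh quotient at the last basis vector gives
`t ≤ λ_n(A(t))`. Since `tr A(t) = tr A' + t` and `tr A(t)² = tr A'² + 2‖b‖² + t²`, the
nonnegative gaps `λ_j(A') - λ_j(A(t))` add up to `λ_n(A(t)) - t`, and `λ_n(A(t))² ≤ t² + C`
with `C = tr A'² + 2‖b‖²`. Hence `0 ≤ λ_n(A(t)) - t ≤ C / 2t → 0`, which yields all three
limits.
-/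

/-- The eigenvalues of a Hermitian matrix, sorted in increasing order. -/
noncomputable def sortedEigs {n : ℕ} {A : Matrix (Fin n) (Fin n) ℂ}
    (hA : A.IsHermitian) : Fin n → ℝ :=
  hA.eigenvalues ∘ Tuple.sort hA.eigenvalues

/-- The `(m+2) × (m+2)` Hermitian matrix whose top-left `(m+1) × (m+1)` block is `A'`,
whose last column above the diagonal is `b`, whose last row left of the diagonal is the
conjugate transpose of `b`, and whose bottom-right entry is `t`. -/
noncomputable def borderedMatrix (m : ℕ) (A' : Matrix (Fin (m+1)) (Fin (m+1)) ℂ)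
    (b : Fin (m+1) → ℂ) (t : ℝ) : Matrix (Fin (m+2)) (Fin (m+2)) ℂ :=
  fun i j =>
    Fin.lastCases
      (Fin.lastCases ((t : ℂ)) (fun j' => star (b j')) j)
      (fun i' => Fin.lastCases (b i') (fun j' => A' i' j') j)
      i

open Matrix Finset Filter Topology

namespace Matrix.IsHermitian

variable {n : ℕ} {A : Matrix (Fin n) (Fin n) ℂ} (hA : A.IsHermitian)

noncomputable def eigenCoords (x : Fin n → ℂ) : Fin n → ℂ :=
  star (hA.eigenvectorUnitary : Matrix (Fin n) (Fin n) ℂ) *ᵥ x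

lemma star_eigenCoords_dotProduct_eigenCoords (x : Fin n → ℂ) :
    star (hA.eigenCoords x) ⬝ᵥ hA.eigenCoords x = star x ⬝ᵥ x := by
  rw [eigenCoords, star_mulVec, ← dotProduct_mulVec, mulVec_mulVec, ← star_eq_conjTranspose,
    star_star, Unitary.mul_star_self_of_mem hA.eigenvectorUnitary.2, one_mulVec]

lemma re_star_dotProduct_self_eq_sum_eigenCoords (x : Fin n → ℂ) :
    (star x ⬝ᵥ x).re = ∑ i, Complex.normSq (hA.eigenCoords x i) := by
  rw [← hA.star_eigenCoords_dotProduct_eigenCoords]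
  simp [dotProduct, Complex.re_sum, Complex.normSq_apply]

lemma re_star_dotProduct_mulVec_eq_sum_eigenCoords (x : Fin n → ℂ) :
    (star x ⬝ᵥ A *ᵥ x).re =
      ∑ i, hA.eigenvalues i * Complex.normSq (hA.eigenCoords x i) := by
  have h : star x ⬝ᵥ A *ᵥ x = star (hA.eigenCoords x) ⬝ᵥ
      diagonal (RCLike.ofReal ∘ hA.eigenvalues) *ᵥ hA.eigenCoords x := by
    conv_lhs => rw [hA.spectral_theorem, Unitary.conjStarAlgAut_apply]
    rw [eigenCoords, star_mulVec, ← dotProduct_mulVec, mulVec_mulVec, mulVec_mulVec,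
      ← star_eq_conjTranspose, star_star, Matrix.mul_assoc]
  rw [h]
  simp [dotProduct, mulVec_diagonal, Complex.re_sum, Complex.normSq_apply]
  exact sum_congr rfl fun i _ => by ring

noncomputable def eigenspan (S : Finset (Fin n)) : Submodule ℂ (Fin n → ℂ) :=
  Submodule.span ℂ (Set.range fun i : S => ⇑(hA.eigenvectorBasis i))

lemma finrank_eigenspan (S : Finset (Fin n)) : Module.finrank ℂ (hA.eigenspan S) = #S := by
  have hli : LinearIndependent ℂ fun i : S => ⇑(hA.eigenvectorBasis i) :=
    ((hA.eigenvectorBasis.toBasis.linearIndependent.map' _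
      (WithLp.linearEquiv 2 ℂ (Fin n → ℂ)).ker).comp _ Subtype.val_injective)
  rw [eigenspan, finrank_span_eq_card hli, Fintype.card_coe]

lemma eigenCoords_eq_zero_of_mem_eigenspan {S : Finset (Fin n)} {x : Fin n → ℂ}
    (hx : x ∈ hA.eigenspan S) {i : Fin n} (hi : i ∉ S) : hA.eigenCoords x i = 0 := by
  suffices hA.eigenspan S ≤ LinearMap.ker
      ((LinearMap.proj i).comp (mulVecLin (star (hA.eigenvectorUnitary : Matrix _ _ ℂ)))) from
    this hx
  refine Submodule.span_le.2 ?_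
  rintro _ ⟨j, rfl⟩
  have hij : i ≠ j := fun h => hi (h ▸ j.2)
  simp [star_eigenvectorUnitary_mulVec, hij]

lemma re_star_dotProduct_mulVec_le_of_mem_eigenspan {S : Finset (Fin n)} {c : ℝ}
    (hc : ∀ i ∈ S, hA.eigenvalues i ≤ c) {x : Fin n → ℂ} (hx : x ∈ hA.eigenspan S) :
    (star x ⬝ᵥ A *ᵥ x).re ≤ c * (star x ⬝ᵥ x).re := by
  rw [hA.re_star_dotProduct_mulVec_eq_sum_eigenCoords,
    hA.re_star_dotProduct_self_eq_sum_eigenCoords, mul_sum]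
  refine sum_le_sum fun i _ => ?_
  by_cases hi : i ∈ S
  · exact mul_le_mul_of_nonneg_right (hc i hi) (Complex.normSq_nonneg _)
  · simp [hA.eigenCoords_eq_zero_of_mem_eigenspan hx hi]

lemma le_re_star_dotProduct_mulVec_of_mem_eigenspan {S : Finset (Fin n)} {c : ℝ}
    (hc : ∀ i ∈ S, c ≤ hA.eigenvalues i) {x : Fin n → ℂ} (hx : x ∈ hA.eigenspan S) :
    c * (star x ⬝ᵥ x).re ≤ (star x ⬝ᵥ A *ᵥ x).re := by
  rw [hA.re_star_dotProduct_mulVec_eq_sum_eigenCoords,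
    hA.re_star_dotProduct_self_eq_sum_eigenCoords, mul_sum]
  refine sum_le_sum fun i _ => ?_
  by_cases hi : i ∈ S
  · exact mul_le_mul_of_nonneg_right (hc i hi) (Complex.normSq_nonneg _)
  · simp [hA.eigenCoords_eq_zero_of_mem_eigenspan hx hi]

end Matrix.IsHermitian

section MinMax

variable {n : ℕ} {A : Matrix (Fin n) (Fin n) ℂ} (hA : A.IsHermitian)

lemma sortedEigs_monotone : Monotone (sortedEigs hA) :=
  Tuple.monotone_sort _

lemma exists_finrank_eq_forall_le_sortedEigs (k : Fin n) :
    ∃ V : Submodule ℂ (Fin n → ℂ), Module.finrank ℂ V = k + 1 ∧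
      ∀ x ∈ V, (star x ⬝ᵥ A *ᵥ x).re ≤ sortedEigs hA k * (star x ⬝ᵥ x).re := by
  set σ := Tuple.sort hA.eigenvalues
  refine ⟨hA.eigenspan ((Iic k).map σ.toEmbedding), ?_,
    fun x hx => hA.re_star_dotProduct_mulVec_le_of_mem_eigenspan ?_ hx⟩
  · rw [hA.finrank_eigenspan, card_map, Fin.card_Iic]
  · simp only [forall_mem_map, mem_Iic]
    exact fun j hj => sortedEigs_monotone hA hj

open scoped ComplexOrder in
lemma sortedEigs_le_of_finrank_le (k : Fin n) {c : ℝ} (W : Submodule ℂ (Fin n → ℂ))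
    (hW : (k : ℕ) + 1 ≤ Module.finrank ℂ W)
    (hle : ∀ x ∈ W, (star x ⬝ᵥ A *ᵥ x).re ≤ c * (star x ⬝ᵥ x).re) :
    sortedEigs hA k ≤ c := by
  set σ := Tuple.sort hA.eigenvalues
  set V := hA.eigenspan ((Ici k).map σ.toEmbedding)
  have hV : Module.finrank ℂ V = n - k := by
    rw [hA.finrank_eigenspan, card_map, Fin.card_Ici]
  have hWV : W ⊓ V ≠ ⊥ := by
    intro hbot
    have := Submodule.finrank_sup_add_finrank_inf_eq W V
    have := (W ⊔ V).finrank_le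
    rw [hbot, finrank_bot, hV, Module.finrank_fin_fun] at *
    omega
  obtain ⟨x, ⟨hxW, hxV⟩, hx⟩ := Submodule.exists_mem_ne_zero_of_ne_bot hWV
  have hge : sortedEigs hA k * (star x ⬝ᵥ x).re ≤ (star x ⬝ᵥ A *ᵥ x).re := by
    refine hA.le_re_star_dotProduct_mulVec_of_mem_eigenspan ?_ hxV
    simp only [forall_mem_map, mem_Ici]
    exact fun j hj => sortedEigs_monotone hA hj
  have hpos : 0 < (star x ⬝ᵥ x).re :=
    (Complex.pos_iff.1 (dotProduct_star_self_pos_iff.2 hx)).1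
  exact le_of_mul_le_mul_right (hge.trans (hle x hxW)) hpos

lemma re_star_dotProduct_mulVec_le_sortedEigs_last {A : Matrix (Fin (n + 1)) (Fin (n + 1)) ℂ}
    (hA : A.IsHermitian) (x : Fin (n + 1) → ℂ) :
    (star x ⬝ᵥ A *ᵥ x).re ≤ sortedEigs hA (Fin.last n) * (star x ⬝ᵥ x).re := by
  obtain ⟨V, hV, hle⟩ := exists_finrank_eq_forall_le_sortedEigs hA (Fin.last n)
  have hV_top : V = ⊤ := Submodule.eq_top_of_finrank_eq (by simpa using hV)
  exact hle x (hV_top ▸ Submodule.mem_top)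

lemma sum_sortedEigs : ∑ i, sortedEigs hA i = A.trace.re := by
  rw [hA.trace_eq_sum_eigenvalues, Complex.re_sum]
  exact Equiv.sum_comp _ hA.eigenvalues

lemma sum_sortedEigs_sq : ∑ i, sortedEigs hA i ^ 2 = (A * A).trace.re := by
  set D : Matrix (Fin n) (Fin n) ℂ := diagonal (RCLike.ofReal ∘ hA.eigenvalues)
  have hAA : A * A = Unitary.conjStarAlgAut ℂ _ hA.eigenvectorUnitary (D * D) := by
    rw [map_mul, ← hA.spectral_theorem]
  rw [hAA, Unitary.conjStarAlgAut_apply, trace_mul_cycle,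
    Unitary.star_mul_self_of_mem hA.eigenvectorUnitary.2, one_mul, diagonal_mul_diagonal,
    trace_diagonal, Complex.re_sum]
  exact (Equiv.sum_comp _ fun i => hA.eigenvalues i ^ 2).trans
    (sum_congr rfl fun i _ => by simp [sq])

end MinMax

section Interlacing

variable {n : ℕ}

@[simp] lemma extend_castSucc_castSucc (x : Fin n → ℂ) (i : Fin n) :
    Function.extend Fin.castSucc x 0 i.castSucc = x i :=
  (Fin.castSucc_injective n).extend_apply x 0 i

@[simp] lemma extend_castSucc_last (x : Fin n → ℂ) :
    Function.extend Fin.castSucc x 0 (Fin.last n) = 0 :=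
  Function.extend_apply' _ _ _ fun ⟨i, hi⟩ => Fin.castSucc_ne_last i hi

lemma star_extend_castSucc_dotProduct_mulVec (B : Matrix (Fin (n + 1)) (Fin (n + 1)) ℂ)
    (x : Fin n → ℂ) :
    star (Function.extend Fin.castSucc x 0) ⬝ᵥ B *ᵥ Function.extend Fin.castSucc x 0 =
      star x ⬝ᵥ B.submatrix Fin.castSucc Fin.castSucc *ᵥ x := by
  simp [dotProduct, mulVec, Fin.sum_univ_castSucc]

lemma star_extend_castSucc_dotProduct (x : Fin n → ℂ) :
    star (Function.extend Fin.castSucc x 0) ⬝ᵥ Function.extend Fin.castSucc x 0 =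
      star x ⬝ᵥ x := by
  simp [dotProduct, Fin.sum_univ_castSucc]

theorem sortedEigs_castSucc_le_sortedEigs_submatrix
    {B : Matrix (Fin (n + 1)) (Fin (n + 1)) ℂ} (hB : B.IsHermitian)
    {A : Matrix (Fin n) (Fin n) ℂ} (hA : A.IsHermitian)
    (h : B.submatrix Fin.castSucc Fin.castSucc = A) (k : Fin n) :
    sortedEigs hB k.castSucc ≤ sortedEigs hA k := by
  obtain ⟨V, hV, hle⟩ := exists_finrank_eq_forall_le_sortedEigs hA k
  set f := Function.ExtendByZero.linearMap ℂ (Fin.castSucc : Fin n → Fin (n + 1))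
  have hf : Function.Injective f := Function.extend_injective (Fin.castSucc_injective n) 0
  refine sortedEigs_le_of_finrank_le hB k.castSucc (V.map f) ?_ ?_
  · rw [← (Submodule.equivMapOfInjective f hf V).finrank_eq, hV, Fin.val_castSucc]
  · rintro _ ⟨x, hx, rfl⟩
    have hfx : f x = Function.extend Fin.castSucc x 0 := rfl
    rw [hfx, star_extend_castSucc_dotProduct_mulVec, star_extend_castSucc_dotProduct, h]
    exact hle x hx

end Interlacing

section Bordered

variable {m : ℕ} {A' : Matrix (Fin (m + 1)) (Fin (m + 1)) ℂ} {b : Fin (m + 1) → ℂ} {t : ℝ}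

@[simp] lemma borderedMatrix_castSucc_castSucc (i j : Fin (m + 1)) :
    borderedMatrix m A' b t i.castSucc j.castSucc = A' i j := by
  simp [borderedMatrix]

@[simp] lemma borderedMatrix_castSucc_last (i : Fin (m + 1)) :
    borderedMatrix m A' b t i.castSucc (Fin.last (m + 1)) = b i := by
  simp [borderedMatrix]

@[simp] lemma borderedMatrix_last_castSucc (j : Fin (m + 1)) :
    borderedMatrix m A' b t (Fin.last (m + 1)) j.castSucc = star (b j) := by
  simp [borderedMatrix]

@[simp] lemma borderedMatrix_last_last :
    borderedMatrix m A' b t (Fin.last (m + 1)) (Fin.last (m + 1)) = t := by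
  simp [borderedMatrix]

lemma submatrix_castSucc_borderedMatrix :
    (borderedMatrix m A' b t).submatrix Fin.castSucc Fin.castSucc = A' := by
  ext i j
  simp

lemma trace_borderedMatrix : (borderedMatrix m A' b t).trace = A'.trace + t := by
  simp [trace, Fin.sum_univ_castSucc]

lemma trace_borderedMatrix_mul_self :
    (borderedMatrix m A' b t * borderedMatrix m A' b t).trace =
      (A' * A').trace + 2 * ∑ i, (Complex.normSq (b i) : ℂ) + (t : ℂ) ^ 2 := by
  simp [trace, mul_apply, Fin.sum_univ_castSucc (n := m + 1), sum_add_distrib, Complex.mul_conj,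
    ← Complex.normSq_eq_conj_mul_self]
  ring

lemma sum_sortedEigs_borderedMatrix (hB : (borderedMatrix m A' b t).IsHermitian)
    (hA' : A'.IsHermitian) : ∑ i, sortedEigs hB i = ∑ i, sortedEigs hA' i + t := by
  simp [sum_sortedEigs, trace_borderedMatrix]

lemma sum_sortedEigs_sq_borderedMatrix (hB : (borderedMatrix m A' b t).IsHermitian)
    (hA' : A'.IsHermitian) :
    ∑ i, sortedEigs hB i ^ 2 =
      ∑ i, sortedEigs hA' i ^ 2 + 2 * ∑ i, Complex.normSq (b i) + t ^ 2 := by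
  simp [sum_sortedEigs_sq, trace_borderedMatrix_mul_self, Complex.re_sum, ← Complex.ofReal_pow]

end Bordered

lemma tendsto_sub_self_of_sq_le {L : ℝ → ℝ} {C : ℝ} (hge : ∀ t, t ≤ L t)
    (hsq : ∀ t, L t ^ 2 ≤ t ^ 2 + C) : Tendsto (fun t => L t - t) atTop (𝓝 0) := by
  have hC : Tendsto (fun t : ℝ => C / (2 * t)) atTop (𝓝 0) :=
    tendsto_const_nhds.div_atTop (tendsto_id.const_mul_atTop two_pos)
  refine tendsto_of_tendsto_of_tendsto_of_le_of_le' tendsto_const_nhds hC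
    (Eventually.of_forall fun t => sub_nonneg.2 (hge t)) ?_
  filter_upwards [eventually_gt_atTop 0] with t ht
  -- `(L - t) * 2t ≤ (L - t) * (L + t) = L² - t² ≤ C`
  rw [le_div_iff₀ (by positivity)]
  nlinarith [hge t, hsq t]

lemma tendsto_div_self_of_tendsto_sub_self {L : ℝ → ℝ} {a : ℝ}
    (h : Tendsto (fun t => L t - t) atTop (𝓝 a)) :
    Tendsto (fun t => L t / t) atTop (𝓝 1) := by
  have h' : Tendsto (fun t => 1 + (L t - t) / t) atTop (𝓝 (1 + 0)) :=
    tendsto_const_nhds.add (h.div_atTop tendsto_id)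
  rw [add_zero] at h'
  refine h'.congr' ?_
  filter_upwards [eventually_ne_atTop 0] with t ht
  field_simp
  ring

lemma tendsto_of_le_of_tendsto_sum_sub {α ι : Type*} [Fintype ι] {l : Filter α}
    {s : α → ι → ℝ} {μ : ι → ℝ} (hle : ∀ a i, s a i ≤ μ i)
    (hsum : Tendsto (fun a => ∑ i, (μ i - s a i)) l (𝓝 0)) (i : ι) :
    Tendsto (fun a => s a i) l (𝓝 (μ i)) := by
  have hgap : Tendsto (fun a => μ i - s a i) l (𝓝 0) :=
    tendsto_of_tendsto_of_tendsto_of_le_of_le tendsto_const_nhds hsum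
      (fun a => sub_nonneg.2 (hle a i))
      (fun a => single_le_sum (fun j _ => sub_nonneg.2 (hle a j)) (mem_univ i))
  simpa using (tendsto_const_nhds (x := μ i)).sub hgap

/-- Asymptotics of the eigenvalues of a bordered Hermitian matrix as the bottom-right
entry `t → +∞`: the `n-1` smallest eigenvalues converge to those of the principal block,
the largest eigenvalue is at least `t`, and it is asymptotic to `t`. -/
theorem bordered_eigenvalue_asymptotics (m : ℕ)
    (A' : Matrix (Fin (m+1)) (Fin (m+1)) ℂ) (hA' : A'.IsHermitian)
    (b : Fin (m+1) → ℂ)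
    (hAt : ∀ t : ℝ, (borderedMatrix m A' b t).IsHermitian) :
    (∀ j : Fin (m+1),
        Filter.Tendsto (fun t : ℝ => sortedEigs (hAt t) j.castSucc) Filter.atTop
          (nhds (sortedEigs hA' j))) ∧
      (∀ t : ℝ, t ≤ sortedEigs (hAt t) (Fin.last (m+1))) ∧
      Filter.Tendsto (fun t : ℝ => sortedEigs (hAt t) (Fin.last (m+1)) / t)
        Filter.atTop (nhds 1) := by
  set L := fun t => sortedEigs (hAt t) (Fin.last (m + 1))
  have h_le (t : ℝ) (j : Fin (m + 1)) : sortedEigs (hAt t) j.castSucc ≤ sortedEigs hA' j :=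
    sortedEigs_castSucc_le_sortedEigs_submatrix (hAt t) hA' submatrix_castSucc_borderedMatrix j
  have h_ge (t : ℝ) : t ≤ L t := by
    simpa using re_star_dotProduct_mulVec_le_sortedEigs_last (hAt t) (Pi.single (Fin.last _) 1)
  have h_sum (t : ℝ) :
      ∑ j : Fin (m + 1), sortedEigs (hAt t) j.castSucc + L t = ∑ j, sortedEigs hA' j + t := by
    rw [← Fin.sum_univ_castSucc, sum_sortedEigs_borderedMatrix]
  have h_sum_sq (t : ℝ) : ∑ j : Fin (m + 1), sortedEigs (hAt t) j.castSucc ^ 2 + L t ^ 2 =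
      ∑ j, sortedEigs hA' j ^ 2 + 2 * ∑ i, Complex.normSq (b i) + t ^ 2 := by
    rw [← Fin.sum_univ_castSucc (f := fun j => sortedEigs (hAt t) j ^ 2),
      sum_sortedEigs_sq_borderedMatrix]
  have h_gap : Tendsto (fun t => L t - t) atTop (𝓝 0) :=
    tendsto_sub_self_of_sq_le (C := ∑ j, sortedEigs hA' j ^ 2 + 2 * ∑ i, Complex.normSq (b i))
      h_ge fun t => by
        have := sum_nonneg fun (j : Fin (m + 1)) (_ : j ∈ univ) =>
          sq_nonneg (sortedEigs (hAt t) j.castSucc)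
        linarith [h_sum_sq t]
  refine ⟨tendsto_of_le_of_tendsto_sum_sub h_le (h_gap.congr fun t => ?_), h_ge,
    tendsto_div_self_of_tendsto_sub_self h_gap⟩
  rw [sum_sub_distrib]
  linarith [h_sum t]
end

section
/- Let 2 ≤ k ≤ n and let b > 0, B ≥ 0. There exists a constant c > 0, depending only on n, k, b, B, such that for every λ ∈ Γ_{k−1} and all real numbers β_0,…,β_{k−2} with β_l ≥ b for every l, if |f(λ)| ≤ B then σ_{k−1}(λ) ≥ c. -/
open Finset

/-- The `k`-th elementary symmetric function of `lam : Fin n → ℝ`. -/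
noncomputable def esymm (n k : ℕ) (lam : Fin n → ℝ) : ℝ :=
  ∑ s ∈ Finset.powersetCard k (Finset.univ : Finset (Fin n)), ∏ i ∈ s, lam i

/-- The Gårding cone `Γ_k ⊆ ℝ^n`. -/
def GammaCone (n k : ℕ) : Set (Fin n → ℝ) :=
  {lam | ∀ i : ℕ, 1 ≤ i → i ≤ k → 0 < esymm n i lam}

/-- The mixed Hessian operator
`f(λ) = σ_k(λ)/σ_{k-1}(λ) - ∑_{l=0}^{k-2} β_l σ_l(λ)/σ_{k-1}(λ)`. -/
noncomputable def fmix (n k : ℕ) (β : ℕ → ℝ) (lam : Fin n → ℝ) : ℝ :=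
  esymm n k lam / esymm n (k-1) lam
    - ∑ l ∈ Finset.range (k-1), β l * (esymm n l lam / esymm n (k-1) lam)

/-!
Newton's inequalities `E_j E_{j+2} ≤ E_{j+1}²` for the means `E_j = σ_j / C(n, j)` of a real
multiset are proved by induction on its size. By Rolle's theorem the derivative of `∏ (X - r)` is
again real-rooted, with the same means, which lowers the size unless `j + 2` is the size; that case
becomes `j = 0` after passing to the reciprocals. On `Γ_{k-1}` the means `E_0, …, E_{k-1}` are
positive, so the ratios `E_{j+1} / E_j` decrease and `σ_k ≤ D σ_1 σ_{k-1}`. If `f(λ) ≥ -B` then,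
with `T = ∑_{l<k} σ_l ≥ max 1 σ_1`, we get `b T ≤ σ_k + (B + b) σ_{k-1} ≤ (D + B + b) T σ_{k-1}`,
so `σ_{k-1} ≥ b / (D + B + b)`.
-/

open Polynomial

theorem Polynomial.Splits.derivative {p : ℝ[X]} (hp : p.Splits) : (derivative p).Splits := by
  have hrolle := card_roots_le_derivative p
  have hcard := card_roots' (Polynomial.derivative p)
  rw [splits_iff_card_roots] at hp ⊢
  rw [natDegree_derivative] at hcard ⊢
  omega

namespace Multiset

section CommSemiring

variable {R : Type*} [CommSemiring R]

theorem esymm_zero (s : Multiset R) : s.esymm 0 = 1 := by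
  simp [esymm, powersetCard_zero_left]

theorem esymm_eq_zero_of_card_lt (s : Multiset R) {j : ℕ} (hj : card s < j) : s.esymm j = 0 := by
  simp [esymm, powersetCard_eq_empty _ hj]

theorem esymm_card (s : Multiset R) : s.esymm (card s) = s.prod := by
  simp [esymm, powersetCard_self]

theorem esymm_cons_succ (a : R) (s : Multiset R) (j : ℕ) :
    (a ::ₘ s).esymm (j + 1) = s.esymm (j + 1) + a * s.esymm j := by
  simp [esymm, powersetCard_cons, map_map, prod_cons, sum_map_mul_left]

end CommSemiring

theorem prod_mul_esymm_map_inv {K : Type*} [Field K] (s : Multiset K) (hs : ∀ x ∈ s, x ≠ 0)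
    {j : ℕ} (hj : j ≤ card s) : s.prod * (s.map (·⁻¹)).esymm j = s.esymm (card s - j) := by
  induction s using Multiset.induction_on generalizing j with
  | empty => simp_all [esymm_zero]
  | cons a s ih =>
    have ha : a ≠ 0 := hs a (mem_cons_self a s)
    replace ih := @ih fun x hx => hs x (mem_cons_of_mem hx)
    rcases j with _ | j
    · rw [esymm_zero, mul_one, Nat.sub_zero, esymm_card]
    rw [card_cons] at hj ⊢
    have hinv : a * a⁻¹ = 1 := mul_inv_cancel₀ ha
    have hj' := ih (j := j) (by omega)
    rw [map_cons, esymm_cons_succ, prod_cons]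
    rcases (show j ≤ card s by omega).lt_or_eq with hlt | rfl
    · rw [show card s + 1 - (j + 1) = card s - (j + 1) + 1 by omega, esymm_cons_succ,
        show card s - (j + 1) + 1 = card s - j by omega]
      linear_combination a * ih hlt + hj' + s.prod * (s.map (·⁻¹)).esymm j * hinv
    · rw [Nat.sub_self, esymm_zero] at hj'
      rw [esymm_eq_zero_of_card_lt (s.map (·⁻¹)) (by simp), Nat.sub_self, esymm_zero]
      linear_combination (a * a⁻¹) * hj' + hinv

theorem exists_card_sub_mul_esymm_eq_card_mul_esymm (s : Multiset ℝ) (hs : 0 < card s) :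
    ∃ t : Multiset ℝ, card t = card s - 1 ∧
      ∀ j ≤ card t, ((card s - j : ℕ) : ℝ) * s.esymm j = card s * t.esymm j := by
  set P := (s.map fun r => X - C r).prod
  have hPdeg : P.natDegree = card s := natDegree_multiset_prod_X_sub_C_eq_card s
  have hPsplits : P.Splits := by
    rw [splits_iff_card_roots, roots_multiset_prod_X_sub_C, hPdeg]
  have hQsplits := hPsplits.derivative
  have hQdeg : (derivative P).natDegree = card s - 1 := by rw [natDegree_derivative, hPdeg]
  have htcard : card (derivative P).roots = card s - 1 := by
    rw [splits_iff_card_roots.mp hQsplits, hQdeg]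
  refine ⟨(derivative P).roots, htcard, ?_⟩
  have hcoeff : ∀ j ≤ card s - 1, ((card s - j : ℕ) : ℝ) * s.esymm j
      = (derivative P).leadingCoeff * (derivative P).roots.esymm j := by
    intro j hj
    -- Vieta for `P` and for the split `P'`: both coefficients carry the sign `(-1) ^ j`.
    have hP := prod_X_sub_C_coeff s (k := card s - 1 - j + 1) (by omega)
    have hQ := coeff_eq_esymm_roots_of_splits hQsplits (k := card s - 1 - j) (by omega)
    rw [coeff_derivative, hP, hQdeg, show card s - (card s - 1 - j + 1) = j by omega,
      show card s - 1 - (card s - 1 - j) = j by omega] at hQ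
    have hsign : ((-1 : ℝ) ^ j) ≠ 0 := pow_ne_zero _ (by norm_num)
    apply mul_left_cancel₀ hsign
    rw [show ((card s - j : ℕ) : ℝ) = ((card s - 1 - j : ℕ) : ℝ) + 1 by norm_cast; omega]
    linear_combination hQ
  have hlead : (derivative P).leadingCoeff = card s := by
    simpa [esymm_zero] using (hcoeff 0 (Nat.zero_le _)).symm
  intro j hj
  rw [hcoeff j (htcard ▸ hj), hlead]

noncomputable def esymmMean {K : Type*} [Field K] (s : Multiset K) (j : ℕ) : K :=
  s.esymm j / (card s).choose j

section Field

variable {K : Type*} [Field K]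

@[simp]
theorem esymmMean_zero (s : Multiset K) : s.esymmMean 0 = 1 := by
  simp [esymmMean, esymm_zero]

theorem prod_mul_esymmMean_map_inv (s : Multiset K) (hs : ∀ x ∈ s, x ≠ 0) {j : ℕ}
    (hj : j ≤ card s) : s.prod * (s.map (·⁻¹)).esymmMean j = s.esymmMean (card s - j) := by
  rw [esymmMean, esymmMean, card_map, ← mul_div_assoc, prod_mul_esymm_map_inv s hs hj,
    Nat.choose_symm hj]

end Field

theorem exists_esymmMean_eq (s : Multiset ℝ) (hs : 0 < card s) :
    ∃ t : Multiset ℝ, card t + 1 = card s ∧ ∀ j ≤ card t, t.esymmMean j = s.esymmMean j := by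
  obtain ⟨t, ht, hst⟩ := exists_card_sub_mul_esymm_eq_card_mul_esymm s hs
  refine ⟨t, by omega, fun j hj => ?_⟩
  have hchoose := Nat.choose_mul_succ_eq (card t) j
  rw [show card t + 1 = card s by omega] at hchoose
  have htchoose : (0 : ℝ) < (card t).choose j := by norm_cast; exact Nat.choose_pos hj
  have hcard : (0 : ℝ) < card s := by norm_cast
  have hschoose : (0 : ℝ) < (card s).choose j := by norm_cast; exact Nat.choose_pos (by omega)
  have hchoose' : ((card t).choose j * card s : ℝ) = (card s).choose j * (card s - j : ℕ) := by
    exact_mod_cast hchoose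
  rw [esymmMean, esymmMean, div_eq_div_iff htchoose.ne' hschoose.ne', ← mul_right_inj' hcard.ne']
  linear_combination (-((card s).choose j : ℝ)) * hst j hj - s.esymm j * hchoose'

theorem esymmMean_mul_esymmMean_le_sq (s : Multiset ℝ) {j : ℕ} (hj : j + 2 ≤ card s) :
    s.esymmMean j * s.esymmMean (j + 2) ≤ s.esymmMean (j + 1) ^ 2 := by
  obtain ⟨c, hc⟩ : ∃ c, card s = c + 2 := ⟨card s - 2, by omega⟩
  induction c generalizing s j with
  | zero =>
    obtain ⟨x, y, rfl⟩ := card_eq_two.mp hc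
    obtain rfl : j = 0 := by omega
    simp only [zero_add, esymmMean, esymm_zero, insert_eq_cons, esymm_pair_one, esymm_pair_two,
      card_cons, card_singleton]
    norm_num [Nat.choose_two_right]
    nlinarith [sq_nonneg (x - y)]
  | succ c ih =>
    have hderiv : ∀ s : Multiset ℝ, card s = c + 3 → ∀ j ≤ c,
        s.esymmMean j * s.esymmMean (j + 2) ≤ s.esymmMean (j + 1) ^ 2 := by
      intro s hs j hj
      obtain ⟨t, ht, hst⟩ := exists_esymmMean_eq s (by omega)
      rw [← hst j (by omega), ← hst (j + 1) (by omega), ← hst (j + 2) (by omega)]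
      exact ih t (by omega) (by omega)
    rcases Nat.lt_or_ge j (c + 1) with hjc | hjc
    · exact hderiv s hc j (by omega)
    obtain rfl : j = c + 1 := by omega
    by_cases hz : (0 : ℝ) ∈ s
    · have hlast : s.esymmMean (c + 1 + 2) = 0 := by
        rw [esymmMean, show c + 1 + 2 = card s by omega, esymm_card, prod_eq_zero hz, zero_div]
      rw [hlast, mul_zero]
      positivity
    have hinv := hderiv (s.map (·⁻¹)) (by simp [hc]) 0 (Nat.zero_le _)
    have hs : ∀ x ∈ s, x ≠ 0 := fun x hx h => hz (h ▸ hx)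
    have h0 : s.prod * (s.map (·⁻¹)).esymmMean 0 = s.esymmMean (c + 1 + 2) := by
      rw [prod_mul_esymmMean_map_inv s hs (by omega), hc]; rfl
    have h1 : s.prod * (s.map (·⁻¹)).esymmMean 1 = s.esymmMean (c + 1 + 1) := by
      rw [prod_mul_esymmMean_map_inv s hs (by omega), hc]; rfl
    have h2 : s.prod * (s.map (·⁻¹)).esymmMean 2 = s.esymmMean (c + 1) := by
      rw [prod_mul_esymmMean_map_inv s hs (by omega), hc]; rfl
    rw [← h0, ← h1, ← h2]
    linear_combination s.prod ^ 2 * hinv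

theorem esymmMean_succ_le_mul (s : Multiset ℝ) {m : ℕ} (hm : m + 1 ≤ card s)
    (hpos : ∀ j ≤ m, 0 < s.esymmMean j) :
    s.esymmMean (m + 1) ≤ s.esymmMean 1 * s.esymmMean m := by
  induction m with
  | zero => simp
  | succ m ih =>
    have hprev := ih (by omega) fun j hj => hpos j (by omega)
    refine le_of_mul_le_mul_left ?_ (hpos m (by omega))
    calc s.esymmMean m * s.esymmMean (m + 2) ≤ s.esymmMean (m + 1) ^ 2 :=
          esymmMean_mul_esymmMean_le_sq s hm
      _ ≤ s.esymmMean (m + 1) * (s.esymmMean 1 * s.esymmMean m) := by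
          rw [sq]
          gcongr
          exact (hpos (m + 1) le_rfl).le
      _ = s.esymmMean m * (s.esymmMean 1 * s.esymmMean (m + 1)) := by ring

end Multiset

theorem esymm_eq_esymm_map (n k : ℕ) (lam : Fin n → ℝ) :
    esymm n k lam = (univ.val.map lam).esymm k :=
  (Finset.esymm_map_val lam univ k).symm

theorem esymm_zero (n : ℕ) (lam : Fin n → ℝ) : esymm n 0 lam = 1 := by
  simp [esymm]

theorem esymm_pos_of_mem_gammaCone {n m j : ℕ} {lam : Fin n → ℝ} (hlam : lam ∈ GammaCone n m)
    (hj : j ≤ m) : 0 < esymm n j lam := by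
  rcases j with _ | j
  · simp [esymm_zero]
  · exact hlam (j + 1) (by omega) hj

theorem esymm_succ_le_mul_esymm_one_mul_esymm {n m : ℕ} {lam : Fin n → ℝ}
    (hlam : lam ∈ GammaCone n m) (hmn : m + 1 ≤ n) :
    esymm n (m + 1) lam ≤
      n.choose (m + 1) / (n * n.choose m) * (esymm n 1 lam * esymm n m lam) := by
  have hmean : ∀ j, (univ.val.map lam).esymmMean j = esymm n j lam / n.choose j := by
    intro j
    simp [Multiset.esymmMean, esymm_eq_esymm_map]
  have hchoose : ∀ j ≤ n, (0 : ℝ) < n.choose j := fun j hj => by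
    exact_mod_cast Nat.choose_pos hj
  have hmaclaurin := (univ.val.map lam).esymmMean_succ_le_mul (m := m) (by simpa using hmn)
    fun j hj => by
      rw [hmean]
      exact div_pos (esymm_pos_of_mem_gammaCone hlam hj) (hchoose j (by omega))
  rw [hmean, hmean, hmean, Nat.choose_one_right] at hmaclaurin
  have hpos := hchoose (m + 1) hmn
  calc esymm n (m + 1) lam = n.choose (m + 1) * (esymm n (m + 1) lam / n.choose (m + 1)) := by
        field_simp
    _ ≤ n.choose (m + 1) * (esymm n 1 lam / n * (esymm n m lam / n.choose m)) := by gcongr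
    _ = n.choose (m + 1) / (n * n.choose m) * (esymm n 1 lam * esymm n m lam) := by ring

theorem esymm_le_sum_range_esymm {n k j : ℕ} {lam : Fin n → ℝ}
    (hlam : lam ∈ GammaCone n (k - 1)) (hj : j < k) :
    esymm n j lam ≤ ∑ l ∈ range k, esymm n l lam :=
  single_le_sum
    (fun _ hl => (esymm_pos_of_mem_gammaCone hlam (Nat.le_sub_one_of_lt (mem_range.mp hl))).le)
    (mem_range.mpr hj)

theorem mul_sum_esymm_le_of_neg_le_fmix {n k : ℕ} {β : ℕ → ℝ} {lam : Fin n → ℝ} {b B : ℝ}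
    (hβ : ∀ l, l ≤ k - 2 → b ≤ β l) (hlam : lam ∈ GammaCone n (k - 1))
    (hf : -B ≤ fmix n k β lam) :
    b * ∑ l ∈ range (k - 1), esymm n l lam ≤ esymm n k lam + B * esymm n (k - 1) lam := by
  have hfmix : fmix n k β lam = (esymm n k lam - ∑ l ∈ range (k - 1), β l * esymm n l lam)
      / esymm n (k - 1) lam := by
    simp only [fmix, sub_div, sum_div, mul_div_assoc]
  rw [hfmix, le_div_iff₀ (esymm_pos_of_mem_gammaCone hlam le_rfl)] at hf
  have hβσ : b * ∑ l ∈ range (k - 1), esymm n l lam ≤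
      ∑ l ∈ range (k - 1), β l * esymm n l lam := by
    rw [mul_sum]
    gcongr with l hl
    · exact (esymm_pos_of_mem_gammaCone hlam (by rw [mem_range] at hl; omega)).le
    · exact hβ l (by rw [mem_range] at hl; omega)
  linarith

/-- Uniform positive lower bound on `σ_{k-1}(λ)`, depending only on `n, k, b, B`,
whenever all `β_l ≥ b > 0` and `|f(λ)| ≤ B`. -/
theorem esymm_pred_lower_bound_of_fmix_bounded (n k : ℕ) (hk2 : 2 ≤ k) (hkn : k ≤ n)
    (b B : ℝ) (hb : 0 < b) (hB : 0 ≤ B) :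
    ∃ c > 0, ∀ (β : ℕ → ℝ), (∀ l, l ≤ k - 2 → b ≤ β l) →
      ∀ lam ∈ GammaCone n (k-1), |fmix n k β lam| ≤ B →
        c ≤ esymm n (k-1) lam := by
  set D : ℝ := n.choose k / (n * n.choose (k - 1))
  refine ⟨b / (D + B + b), by positivity, fun β hβ lam hlam hf => ?_⟩
  set s := esymm n (k - 1) lam
  set T := ∑ l ∈ range k, esymm n l lam
  have hs : 0 < s := esymm_pos_of_mem_gammaCone hlam le_rfl
  have hT1 : 1 ≤ T := esymm_zero n lam ▸ esymm_le_sum_range_esymm hlam (by omega)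
  have hσ₁ : esymm n 1 lam ≤ T := esymm_le_sum_range_esymm hlam (by omega)
  have hT : T = ∑ l ∈ range (k - 1), esymm n l lam + s := by
    rw [← sum_range_succ, Nat.sub_add_cancel (by omega)]
  have hσk : esymm n k lam ≤ D * (esymm n 1 lam * s) := by
    obtain ⟨m, rfl⟩ : ∃ m, k = m + 1 := ⟨k - 1, by omega⟩
    exact esymm_succ_le_mul_esymm_one_mul_esymm hlam hkn
  have hfB := mul_sum_esymm_le_of_neg_le_fmix hβ hlam (abs_le.mp hf).1
  rw [div_le_iff₀ (by positivity)]
  refine le_of_mul_le_mul_right ?_ (by linarith : 0 < T)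
  calc b * T ≤ D * (esymm n 1 lam * s) + (B + b) * s := by rw [hT]; linarith
    _ ≤ D * (T * s) + (B + b) * s * T := by
        have hD : 0 ≤ D := by positivity
        exact add_le_add (by gcongr) (le_mul_of_one_le_right (by positivity) hT1)
    _ = s * (D + B + b) * T := by ring
end
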